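/- For every integer n ≥ 1, the following three identities hold: f_2(n) + f_3(n) = f_1(n), f_3(n) - f_2(n) = f_5(n), and 3·f_4(n) = 2·f_5(n) - f_3(n). -/

import Mathlib

open Finset

/-- `f₁(n) = Σ_{i=n}^{2n} C(3n+1, n+i+1)·C(i, n)`. -/
def f1 (n : ℕ) : ℕ :=
  ∑ i ∈ Finset.Icc n (2 * n), (3 * n + 1).choose (n + i + 1) * i.choose n

/-- `f₂(n) = Σ_{i=n}^{2n-1} C(3n, n+i+1)·C(i, n)`. -/
def f2 (n : ℕ) : ℕ :=
  ∑ i ∈ Finset.Icc n (2 * n - 1), (3 * n).choose (n + i + 1) * i.choose n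

/-- `f₃(n) = Σ_{i=n}^{2n} C(3n, n+i)·C(i, n)`. -/
def f3 (n : ℕ) : ℕ :=
  ∑ i ∈ Finset.Icc n (2 * n), (3 * n).choose (n + i) * i.choose n

/-- `f₄(n) = Σ_{i=n-1}^{2n-2} C(3n-1, n+i+1)·C(i, n-1)` for `n ≥ 1`. -/
def f4 (n : ℕ) : ℕ :=
  ∑ i ∈ Finset.Icc (n - 1) (2 * n - 2), (3 * n - 1).choose (n + i + 1) * i.choose (n - 1)

/-- `f₅(n) = Σ_{i=n-1}^{2n-1} C(3n, n+i+1)·C(i, n-1)` for `n ≥ 1`. -/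
def f5 (n : ℕ) : ℕ :=
  ∑ i ∈ Finset.Icc (n - 1) (2 * n - 1), (3 * n).choose (n + i + 1) * i.choose (n - 1)

/-!
Every `fⱼ` is a sum `Σᵢ C(N, a + i) C(i, c)` taken over the whole support of its summand. Pascal's
rule, applied to either binomial coefficient, then expresses all five sums through four sums with
`N = 3n - 1`, and the three relations reduce to the single identity `A + E = 4D` between the sums
with `(a, c) = (n - 1, n)`, `(n + 1, n)` and `(n, n)`. That identity is a discrete form of
`∮ (1 - 4x + x²) (1 + x)^(3n-1) / (x (1 - x))^(n+1) dx = 0` around `0`, the integrand being a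
multiple of the derivative of `(1 + x)^(3n) / (x (1 - x))^n`; correspondingly, `n` times its
summand telescopes against `(n + 1) C(3n, n + i) C(i, n + 1)`.
-/

def binomSum (N a c : ℕ) : ℕ :=
  ∑ i ∈ range (N + 1), N.choose (a + i) * i.choose c

theorem sum_Icc_eq_binomSum {N a c lo hi : ℕ} (hlo : lo ≤ c) (hhi : hi ≤ N) (hN : N ≤ a + hi) :
    ∑ i ∈ Icc lo hi, N.choose (a + i) * i.choose c = binomSum N a c := by
  refine sum_subset (fun i hi => by simp only [mem_Icc, mem_range] at hi ⊢; omega) fun i _ hi => ?_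
  rw [mem_Icc, not_and_or, not_le, not_le] at hi
  rcases hi with hi | hi
  · rw [Nat.choose_eq_zero_of_lt (by omega : i < c), mul_zero]
  · rw [Nat.choose_eq_zero_of_lt (by omega : N < a + i), zero_mul]

theorem binomSum_succ_succ (N a c : ℕ) :
    binomSum (N + 1) (a + 1) c = binomSum N a c + binomSum N (a + 1) c := by
  rw [binomSum, sum_range_succ, Nat.choose_eq_zero_of_lt (by omega : N + 1 < a + 1 + (N + 1)),
    zero_mul, add_zero, binomSum, binomSum, ← sum_add_distrib]
  refine sum_congr rfl fun i _ => ?_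
  rw [Nat.add_right_comm, Nat.choose_succ_succ', add_mul]

theorem binomSum_succ_right (N a c : ℕ) :
    binomSum N a (c + 1) = binomSum N (a + 1) c + binomSum N (a + 1) (c + 1) := by
  rw [binomSum, sum_range_succ', Nat.choose_zero_succ, mul_zero, add_zero, binomSum, binomSum,
    ← sum_add_distrib, sum_range_succ, Nat.choose_eq_zero_of_lt (by omega : N < a + 1 + N)]
  simp only [zero_mul, add_zero]
  refine sum_congr rfl fun i _ => ?_
  rw [Nat.choose_succ_succ, mul_add, Nat.add_right_comm, add_assoc]

theorem f1_eq_binomSum (n : ℕ) : f1 n = binomSum (3 * n + 1) (n + 1) n :=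
  (sum_congr rfl fun _ _ => by rw [Nat.add_right_comm]).trans
    (sum_Icc_eq_binomSum le_rfl (by omega) (by omega))

theorem f2_eq_binomSum {n : ℕ} (hn : 1 ≤ n) : f2 n = binomSum (3 * n) (n + 1) n :=
  (sum_congr rfl fun _ _ => by rw [Nat.add_right_comm]).trans
    (sum_Icc_eq_binomSum le_rfl (by omega) (by omega))

theorem f3_eq_binomSum (n : ℕ) : f3 n = binomSum (3 * n) n n :=
  sum_Icc_eq_binomSum le_rfl (by omega) (by omega)

theorem f4_eq_binomSum (n : ℕ) : f4 n = binomSum (3 * n - 1) (n + 1) (n - 1) :=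
  (sum_congr rfl fun _ _ => by rw [Nat.add_right_comm]).trans
    (sum_Icc_eq_binomSum le_rfl (by omega) (by omega))

theorem f5_eq_binomSum (n : ℕ) : f5 n = binomSum (3 * n) (n + 1) (n - 1) :=
  (sum_congr rfl fun _ _ => by rw [Nat.add_right_comm]).trans
    (sum_Icc_eq_binomSum le_rfl (by omega) (by omega))

-- `Nat.choose_succ_right_eq` without truncated subtraction, so that it survives the cast to `ℤ`.
theorem Nat.choose_succ_mul_add_choose_mul (n k : ℕ) :
    n.choose (k + 1) * (k + 1) + n.choose k * k = n.choose k * n := by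
  rcases le_or_gt k n with h | h
  · rw [Nat.choose_succ_right_eq, ← mul_add, Nat.sub_add_cancel h]
  · rw [Nat.choose_eq_zero_of_lt h, Nat.choose_eq_zero_of_lt (by omega : n < k + 1)]
    simp

theorem binomSum_add_binomSum_eq_four_mul (k : ℕ) :
    binomSum (3 * k + 2) k (k + 1) + binomSum (3 * k + 2) (k + 2) (k + 1) =
      4 * binomSum (3 * k + 2) (k + 1) (k + 1) := by
  let g : ℕ → ℤ := fun i => (k + 2) * (3 * k + 3).choose (k + 1 + i) * i.choose (k + 2)
  have step (i : ℕ) : ((k : ℤ) + 1) * (((3 * k + 2).choose (k + i) + (3 * k + 2).choose (k + 2 + i)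
      - 4 * (3 * k + 2).choose (k + 1 + i) : ℤ) * i.choose (k + 1)) = g i - g (i + 1) := by
    have x01 : (3 * k + 3).choose (k + 1 + i) =
        (3 * k + 2).choose (k + i) + (3 * k + 2).choose (k + 1 + i) := by
      rw [add_right_comm]; exact Nat.choose_succ_succ' _ _
    have x12 : (3 * k + 3).choose (k + 1 + (i + 1)) =
        (3 * k + 2).choose (k + 1 + i) + (3 * k + 2).choose (k + 2 + i) := by
      rw [← add_assoc, show k + 2 + i = k + 1 + i + 1 by omega]; exact Nat.choose_succ_succ' _ _
    have pq : (i + 1).choose (k + 2) = i.choose (k + 1) + i.choose (k + 2) :=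
      Nat.choose_succ_succ' _ _
    have r01 := Nat.choose_succ_mul_add_choose_mul (3 * k + 2) (k + i)
    have r12 := Nat.choose_succ_mul_add_choose_mul (3 * k + 2) (k + 1 + i)
    have rpq := Nat.choose_succ_mul_add_choose_mul i (k + 1)
    rw [add_right_comm k i 1] at r01
    rw [show k + 1 + i + 1 = k + 2 + i by omega] at r12
    zify at r01 r12 rpq
    simp only [g]
    rw [x01, x12, pq]
    push_cast
    linear_combination ((3 * k + 2).choose (k + 2 + i) - (3 * k + 2).choose (k + i) : ℤ) * rpq
      + (i.choose (k + 1) : ℤ) * (r12 - r01)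
  have telescope : ∑ i ∈ range (3 * k + 3), (g i - g (i + 1)) = 0 := by
    rw [sum_range_sub']
    simp [g, Nat.choose_eq_zero_of_lt (by omega : 3 * k + 3 < k + 1 + (3 * k + 3))]
  simp only [← step] at telescope
  have hmul : ((k : ℤ) + 1) * (binomSum (3 * k + 2) k (k + 1) +
      binomSum (3 * k + 2) (k + 2) (k + 1) - 4 * binomSum (3 * k + 2) (k + 1) (k + 1) : ℤ) = 0 := by
    rw [← telescope]
    push_cast [binomSum, mul_sum, ← sum_add_distrib, ← sum_sub_distrib]
    exact sum_congr rfl fun i _ => by ring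
  have := (mul_eq_zero.1 hmul).resolve_left (by positivity)
  omega

theorem f_relations (n : ℕ) (hn : 1 ≤ n) :
    (f2 n : ℤ) + f3 n = f1 n ∧
    (f3 n : ℤ) - f2 n = f5 n ∧
    3 * (f4 n : ℤ) = 2 * f5 n - f3 n := by
  obtain ⟨k, rfl⟩ : ∃ k, n = k + 1 := ⟨n - 1, by omega⟩
  set A := binomSum (3 * k + 2) k (k + 1)
  set D := binomSum (3 * k + 2) (k + 1) (k + 1)
  set E := binomSum (3 * k + 2) (k + 2) (k + 1)
  set A' := binomSum (3 * k + 2) (k + 1) k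
  have hf1 : f1 (k + 1) = f3 (k + 1) + f2 (k + 1) := by
    rw [f1_eq_binomSum, f2_eq_binomSum hn, f3_eq_binomSum]; exact binomSum_succ_succ _ _ _
  have hf2 : f2 (k + 1) = D + E := (f2_eq_binomSum hn).trans (binomSum_succ_succ _ _ _)
  have hf3 : f3 (k + 1) = A + D := (f3_eq_binomSum _).trans (binomSum_succ_succ _ _ _)
  have hf4 : D = f4 (k + 1) + E := by rw [f4_eq_binomSum]; exact binomSum_succ_right _ _ _
  have hf5 : f5 (k + 1) = A' + f4 (k + 1) := by
    rw [f5_eq_binomSum, f4_eq_binomSum]; exact binomSum_succ_succ _ _ _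
  have hA : A = A' + D := binomSum_succ_right _ _ _
  have key : A + E = 4 * D := binomSum_add_binomSum_eq_four_mul k
  omega
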